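/- arXiv:math/0206192 — 3 statements merged into one kernel-verified Lean document; each statement's English description precedes it below -/
import Mathlib

section
/- Let A be a Noetherian commutative ring and let I and J be ideals of A. Then the Ratliff-Rush closure of IJ equals the union over all r, s ≥ 0 of the colon ideals (I^{r+1}J^{s+1} : I^r J^s). -/
/-- The Ratliff-Rush closure of an ideal `K` in a Noetherian ring:
the union over `n ≥ 0` of `(K^(n+1) : K^n)`. -/
def ratliffRushClosure {A : Type*} [CommRing A] (K : Ideal A) : Set A :=
  ⋃ n : ℕ, ((K ^ (n + 1)).colon (K ^ n : Ideal A) : Set A)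

/-!
Multiplying numerator and denominator by `I^a J^b` shows that the colon ideals
`(I^(r+1) J^(s+1) : I^r J^s)` increase with `r` and `s`. The diagonal `r = s` is the chain
`((IJ)^(n+1) : (IJ)^n)`, and it is cofinal, so both unions agree.
-/

namespace Ideal

variable {A : Type*} [CommRing A]

theorem mem_colon_iff_span_singleton_mul_le {x : A} {N P : Ideal A} :
    x ∈ N.colon P ↔ span {x} * P ≤ N :=
  Submodule.mem_colon.trans span_singleton_mul_le_iff.symm

theorem colon_le_mul_colon_mul (Q N P : Ideal A) : N.colon P ≤ (Q * N).colon (Q * P) := by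
  intro x hx
  rw [mem_colon_iff_span_singleton_mul_le] at hx ⊢
  calc span {x} * (Q * P) = Q * (span {x} * P) := mul_left_comm _ _ _
    _ ≤ Q * N := mul_mono_right hx

theorem colon_pow_mul_pow_mono (I J : Ideal A) {r s m n : ℕ} (hr : r ≤ m) (hs : s ≤ n) :
    (I ^ (r + 1) * J ^ (s + 1)).colon (I ^ r * J ^ s) ≤
      (I ^ (m + 1) * J ^ (n + 1)).colon (I ^ m * J ^ n) := by
  obtain ⟨a, rfl⟩ := Nat.exists_eq_add_of_le hr
  obtain ⟨b, rfl⟩ := Nat.exists_eq_add_of_le hs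
  have h := colon_le_mul_colon_mul (I ^ a * J ^ b) (I ^ (r + 1) * J ^ (s + 1)) (I ^ r * J ^ s)
  rwa [show I ^ a * J ^ b * (I ^ (r + 1) * J ^ (s + 1)) = I ^ (r + a + 1) * J ^ (s + b + 1) by ring,
    show I ^ a * J ^ b * (I ^ r * J ^ s) = I ^ (r + a) * J ^ (s + b) by ring] at h

end Ideal

theorem ratliffRush_mul_eq_union_colon_general {A : Type*} [CommRing A]
    (I J : Ideal A) :
    ratliffRushClosure (I * J) =
      ⋃ r : ℕ, ⋃ s : ℕ, (((I ^ (r + 1) * J ^ (s + 1))).colon (I ^ r * J ^ s) : Set A) := by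
  simp only [ratliffRushClosure, mul_pow]
  exact Set.Subset.antisymm (Set.iUnion_subset fun n => Set.subset_iUnion₂_of_subset n n le_rfl)
    (Set.iUnion₂_subset fun r s => Set.subset_iUnion_of_subset (max r s)
      (Ideal.colon_pow_mul_pow_mono I J (le_max_left r s) (le_max_right r s)))

/-- For ideals `I, J` of a Noetherian commutative ring `A`,
the Ratliff-Rush closure of `IJ` equals
`⋃_{r,s ≥ 0} (I^(r+1) J^(s+1) : I^r J^s)`. -/
theorem ratliffRush_mul_eq_union_colon {A : Type*} [CommRing A] [IsNoetherianRing A]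
    (I J : Ideal A) :
    ratliffRushClosure (I * J) =
      ⋃ r : ℕ, ⋃ s : ℕ, (((I ^ (r + 1) * J ^ (s + 1))).colon (I ^ r * J ^ s) : Set A) :=
  ratliffRush_mul_eq_union_colon_general I J
end

section
/- Let A be a Noetherian commutative ring, I and J ideals of A, and a, b positive integers. Then the Ratliff-Rush closure of I^a J^b equals the union over all k ≥ 0 of the colon ideals (I^{a+k} J^{b+k} : I^k J^k). -/
/-!
Both inclusions come from multiplying a colon relation `x P ⊆ N` by a suitable product of powers
of `I` and `J`. With `K = I^a J^b`, the relation `x K^n ⊆ K^(n+1)` multiplied by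
`I^(b n) J^(a n)` becomes `x I^k J^k ⊆ I^(a+k) J^(b+k)` for `k = n (a + b)`; conversely,
`x I^k J^k ⊆ I^(a+k) J^(b+k)` multiplied by `I^((a-1) k) J^((b-1) k)` (for `a, b ≥ 1`)
becomes `x K^k ⊆ K^(k+1)`.
-/

theorem Ideal.mem_colon_mul_mul {R : Type*} [CommSemiring R] {N P : Ideal R} (Q : Ideal R)
    {x : R} (hx : x ∈ N.colon P) : x ∈ (N * Q).colon (P * Q : Ideal R) := by
  rw [Submodule.mem_colon] at hx ⊢
  intro s hs
  refine Submodule.mul_induction_on hs (fun p hp q hq ↦ ?_) fun s t hs ht ↦ ?_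
  · simpa [← mul_assoc] using Ideal.mul_mem_mul (hx p hp) hq
  · rw [smul_add]
    exact add_mem hs ht

section RatliffRush

variable {A : Type*} [CommRing A] (I J : Ideal A)

theorem ratliffRushClosure_pow_mul_subset_iUnion_colon (a b : ℕ) :
    ratliffRushClosure (I ^ a * J ^ b) ⊆
      ⋃ k : ℕ, ((I ^ (a + k) * J ^ (b + k)).colon (I ^ k * J ^ k) : Set A) := by
  refine Set.iUnion_subset fun n x hx ↦ Set.mem_iUnion.mpr ⟨n * (a + b), ?_⟩
  rw [SetLike.mem_coe] at hx ⊢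
  convert Ideal.mem_colon_mul_mul (I ^ (b * n) * J ^ (a * n)) hx using 2
  · ring
  · congr 1
    ring

theorem iUnion_colon_subset_ratliffRushClosure_pow_mul {a b : ℕ} (ha : 0 < a) (hb : 0 < b) :
    ⋃ k : ℕ, ((I ^ (a + k) * J ^ (b + k)).colon (I ^ k * J ^ k) : Set A) ⊆
      ratliffRushClosure (I ^ a * J ^ b) := by
  obtain ⟨a, rfl⟩ := Nat.exists_eq_add_one.mpr ha
  obtain ⟨b, rfl⟩ := Nat.exists_eq_add_one.mpr hb
  refine Set.iUnion_subset fun k x hx ↦ Set.mem_iUnion.mpr ⟨k, ?_⟩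
  rw [SetLike.mem_coe] at hx ⊢
  convert Ideal.mem_colon_mul_mul (I ^ (a * k) * J ^ (b * k)) hx using 2
  · ring
  · congr 1
    ring

end RatliffRush

theorem ratliffRush_pow_mul_eq_union_colon_general {A : Type*} [CommRing A]
    (I J : Ideal A) (a b : ℕ) (ha : 0 < a) (hb : 0 < b) :
    ratliffRushClosure (I ^ a * J ^ b) =
      ⋃ k : ℕ, (((I ^ (a + k) * J ^ (b + k))).colon (I ^ k * J ^ k) : Set A) :=
  (ratliffRushClosure_pow_mul_subset_iUnion_colon I J a b).antisymm
    (iUnion_colon_subset_ratliffRushClosure_pow_mul I J ha hb)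

/-- For ideals `I, J` of a Noetherian ring `A` and positive integers
`a, b`, the Ratliff-Rush closure of `I^a J^b` equals
`⋃_{k ≥ 0} (I^(a+k) J^(b+k) : I^k J^k)`. -/
theorem ratliffRush_pow_mul_eq_union_colon {A : Type*} [CommRing A] [IsNoetherianRing A]
    (I J : Ideal A) (a b : ℕ) (ha : 0 < a) (hb : 0 < b) :
    ratliffRushClosure (I ^ a * J ^ b) =
      ⋃ k : ℕ, (((I ^ (a + k) * J ^ (b + k))).colon (I ^ k * J ^ k) : Set A) :=
  ratliffRush_pow_mul_eq_union_colon_general I J a b ha hb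
end

section
/- Let A be a commutative ring, I, J ideals, and a ∈ I, b ∈ J elements forming a regular sequence on A. Then there is an A-module isomorphism A/I ⊕ A/J ≅ (a,b)/(aJ + bI). -/
open Submodule Pointwise

/-- If `a ∈ I`, `b ∈ J` form a regular sequence on `A`, then
`A/I ⊕ A/J ≅ (a,b)/(aJ + bI)` as `A`-modules. -/
theorem quotient_prod_equiv_pair_ideal {A : Type*} [CommRing A] (I J : Ideal A)
    (a b : A) (ha : a ∈ I) (hb : b ∈ J)
    (hreg : RingTheory.Sequence.IsRegular A [a, b]) :
    Nonempty (((A ⧸ I) × (A ⧸ J)) ≃ₗ[A]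
      (↥(Ideal.span {a, b}) ⧸
        Submodule.comap (Ideal.span {a, b} : Ideal A).subtype
          (Ideal.span {a} * J + Ideal.span {b} * I))) := by
  -- extract regularity facts
  have hwr := hreg.1
  rw [RingTheory.Sequence.isWeaklyRegular_cons_iff] at hwr
  obtain ⟨hra, hwr2⟩ := hwr
  rw [RingTheory.Sequence.isWeaklyRegular_cons_iff] at hwr2
  have hrb' : IsSMulRegular (QuotSMulTop a A) b := hwr2.1
  have hmem : ∀ x : A, x ∈ (a • ⊤ : Submodule A A) ↔ x ∈ Ideal.span {a} := by
    intro x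
    constructor
    · intro hx
      rw [← SetLike.mem_coe, coe_pointwise_smul] at hx
      obtain ⟨y, -, rfl⟩ := hx
      exact Ideal.mem_span_singleton'.mpr ⟨y, mul_comm _ _⟩
    · intro hx
      obtain ⟨y, rfl⟩ := Ideal.mem_span_singleton'.mp hx
      have := smul_mem_pointwise_smul y a (⊤ : Submodule A A) trivial
      simpa [smul_eq_mul, mul_comm] using this
  have hrb : ∀ x : A, b * x ∈ Ideal.span {a} → x ∈ Ideal.span {a} := by
    intro x hx
    have h0 : (b • Submodule.Quotient.mk x : QuotSMulTop a A) = b • 0 := by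
      rw [smul_zero, ← Submodule.Quotient.mk_smul, Submodule.Quotient.mk_eq_zero,
        hmem]
      simpa [smul_eq_mul] using hx
    have h1 := hrb' h0
    rwa [Submodule.Quotient.mk_eq_zero, hmem] at h1
  -- setup
  set S : Ideal A := Ideal.span {a, b} with hS
  have haS : a ∈ S := Ideal.subset_span (Set.mem_insert _ _)
  have hbS : b ∈ S := Ideal.subset_span (Set.mem_insert_of_mem _ rfl)
  set K : Ideal A := Ideal.span {a} * J + Ideal.span {b} * I with hK
  set N : Submodule A S := Submodule.comap S.subtype K with hN
  have hmemN : ∀ (x : S), x ∈ N ↔ (x : A) ∈ K := fun x => Iff.rfl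
  -- the linear maps
  set g1 : A →ₗ[A] S := LinearMap.toSpanSingleton A S ⟨b, hbS⟩ with hg1
  set g2 : A →ₗ[A] S := LinearMap.toSpanSingleton A S ⟨a, haS⟩ with hg2
  have hker1 : I ≤ LinearMap.ker (N.mkQ ∘ₗ g1) := by
    intro u hu
    simp only [LinearMap.mem_ker, LinearMap.comp_apply, mkQ_apply,
      Submodule.Quotient.mk_eq_zero, hg1, LinearMap.toSpanSingleton_apply]
    show (u • (⟨b, hbS⟩ : S) : S) ∈ N
    rw [hmemN]
    refine Submodule.mem_sup_right ?_
    exact Ideal.mem_span_singleton_mul.mpr ⟨u, hu, by simp [smul_eq_mul, mul_comm]⟩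
  have hker2 : J ≤ LinearMap.ker (N.mkQ ∘ₗ g2) := by
    intro v hv
    simp only [LinearMap.mem_ker, LinearMap.comp_apply, mkQ_apply,
      Submodule.Quotient.mk_eq_zero, hg2, LinearMap.toSpanSingleton_apply]
    show (v • (⟨a, haS⟩ : S) : S) ∈ N
    rw [hmemN]
    refine Submodule.mem_sup_left ?_
    exact Ideal.mem_span_singleton_mul.mpr ⟨v, hv, by simp [smul_eq_mul, mul_comm]⟩
  set f1 : (A ⧸ I) →ₗ[A] (S ⧸ N) := Submodule.liftQ I (N.mkQ ∘ₗ g1) hker1 with hf1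
  set f2 : (A ⧸ J) →ₗ[A] (S ⧸ N) := Submodule.liftQ J (N.mkQ ∘ₗ g2) hker2 with hf2
  set f : (A ⧸ I) × (A ⧸ J) →ₗ[A] (S ⧸ N) := f1.coprod f2 with hf
  have hfapp : ∀ u v : A, f (Submodule.Quotient.mk u, Submodule.Quotient.mk v)
      = N.mkQ ⟨u * b + v * a, S.add_mem (S.mul_mem_left u hbS) (S.mul_mem_left v haS)⟩ := by
    intro u v
    simp only [hf, LinearMap.coprod_apply, hf1, hf2, Submodule.liftQ_apply,
      LinearMap.comp_apply, hg1, hg2, LinearMap.toSpanSingleton_apply, ← map_add]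
    congr 1
  have hsurj : Function.Surjective f := by
    intro z
    obtain ⟨s, rfl⟩ := N.mkQ_surjective z
    obtain ⟨x, hx⟩ := s
    obtain ⟨m, n, hmn⟩ := Ideal.mem_span_pair.mp hx
    refine ⟨(Submodule.Quotient.mk n, Submodule.Quotient.mk m), ?_⟩
    rw [hfapp]
    congr 1
    ext
    simp only
    rw [← hmn]; ring
  have hinj : Function.Injective f := by
    rw [← LinearMap.ker_eq_bot, eq_bot_iff]
    rintro ⟨x, y⟩ hxy
    obtain ⟨u, rfl⟩ := Submodule.Quotient.mk_surjective I x
    obtain ⟨v, rfl⟩ := Submodule.Quotient.mk_surjective J y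
    rw [LinearMap.mem_ker, hfapp, mkQ_apply, Submodule.Quotient.mk_eq_zero, hmemN] at hxy
    -- hxy : u * b + v * a ∈ K
    obtain ⟨p, hp, q, hq, hpq⟩ := Submodule.mem_sup.mp hxy
    obtain ⟨j, hj, hjp⟩ := Ideal.mem_span_singleton_mul.mp hp
    obtain ⟨i, hi, hiq⟩ := Ideal.mem_span_singleton_mul.mp hq
    -- u*b + v*a = a*j + b*i
    have heq : u * b + v * a = a * j + b * i := by
      rw [← hjp, ← hiq] at hpq; exact hpq.symm
    have key : b * (u - i) = a * (j - v) := by linear_combination heq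
    have hu : u ∈ I := by
      have h1 : b * (u - i) ∈ Ideal.span {a} :=
        key ▸ Ideal.mem_span_singleton'.mpr ⟨j - v, mul_comm _ _⟩
      obtain ⟨t, ht⟩ := Ideal.mem_span_singleton'.mp (hrb _ h1)
      have : u = i + t * a := by linear_combination -ht
      rw [this]
      exact I.add_mem hi (I.mul_mem_left t ha)
    have hv : v ∈ J := by
      obtain ⟨t, ht⟩ := Ideal.mem_span_singleton'.mp (hrb _
        (key ▸ Ideal.mem_span_singleton'.mpr ⟨j - v, mul_comm _ _⟩))
      -- u - i = t * a, so b*(t*a) = a*(j-v), so a*(b*t) = a*(j-v), cancel a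
      have h2 : a * (b * t) = a * (j - v) := by rw [← key, ← ht]; ring
      have h3 : b * t = j - v := hra (by simpa [smul_eq_mul] using h2)
      have : v = j - b * t := by linear_combination h3
      rw [this]
      exact J.sub_mem hj (J.mul_mem_right t hb)
    simp only [Submodule.mem_bot, Prod.mk_eq_zero] at *
    exact ⟨(Submodule.Quotient.mk_eq_zero _).mpr hu, (Submodule.Quotient.mk_eq_zero _).mpr hv⟩
  exact ⟨LinearEquiv.ofBijective f ⟨hinj, hsurj⟩⟩
end
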